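/- Positivity of the left intermediate state in the Rusanov positivity proof: let γ > 1, let (ρ, v, p) be a primitive state with ρ > 0 and p > 0, with conserved vector U, Euler flux F(U) and sound speed c = √(γp/ρ), and let λ, w ∈ ℝ satisfy (λ − w) + v ≥ c. Then the vector B = (λ − w)·U + F(U) = (ρ_B, m_B, E_B) satisfies ρ_B ≥ ρc > 0 and (γ−1)(E_B − m_B²/(2ρ_B)) > 0, i.e. B has positive density and positive pressure. -/

import Mathlib

noncomputable section

/-- Conserved vector `U = (ρ, ρv, E)` of a primitive state `(ρ, v, p)`,
with `E = p/(γ-1) + ρ v²/2`. -/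
def consU (γ ρ v p : ℝ) : ℝ × ℝ × ℝ := (ρ, ρ * v, p / (γ - 1) + ρ * v ^ 2 / 2)

/-- Euler flux `F(U) = (ρv, p + ρv², (E+p)v)`. -/
def eulerFlux (γ ρ v p : ℝ) : ℝ × ℝ × ℝ :=
  (ρ * v, p + ρ * v ^ 2, (p / (γ - 1) + ρ * v ^ 2 / 2 + p) * v)

/-- Sound speed `c = √(γ p / ρ)`. -/
def soundSpeed (γ ρ p : ℝ) : ℝ := Real.sqrt (γ * p / ρ)

/-- Pressure `(γ−1)(E − m²/(2ρ))` of a conserved vector `(ρ, m, E)`. -/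
def pressureOf (γ : ℝ) (u : ℝ × ℝ × ℝ) : ℝ := (γ - 1) * (u.2.2 - u.2.1 ^ 2 / (2 * u.1))

/-!
Write `a = (λ − w) + v`. Then `B = (ρa, ρva + p, Ea + pv)`, and the kinetic and flux terms
cancel in the pressure of `B`, leaving `p a − (γ−1)p²/(2ρa)`. The wave-speed condition `a ≥ c`
gives `ρa² ≥ ρc² = γp > (γ−1)p/2`, so this pressure is positive.
-/

theorem soundSpeed_pos {γ ρ p : ℝ} (hγ : 0 < γ) (hρ : 0 < ρ) (hp : 0 < p) :
    0 < soundSpeed γ ρ p :=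
  Real.sqrt_pos.mpr (by positivity)

theorem mul_soundSpeed_sq {γ ρ p : ℝ} (hρ : 0 < ρ) (hγp : 0 ≤ γ * p) :
    ρ * soundSpeed γ ρ p ^ 2 = γ * p := by
  rw [soundSpeed, Real.sq_sqrt (by positivity)]
  field_simp

theorem smul_consU_add_eulerFlux_fst (γ ρ v p s : ℝ) :
    (s • consU γ ρ v p + eulerFlux γ ρ v p).1 = ρ * (s + v) := by
  simp only [consU, eulerFlux, Prod.fst_add, Prod.smul_fst, smul_eq_mul]
  ring

theorem pressureOf_smul_consU_add_eulerFlux {γ ρ v p s : ℝ} (hγ : γ ≠ 1) (hρ : ρ ≠ 0)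
    (hsv : s + v ≠ 0) :
    pressureOf γ (s • consU γ ρ v p + eulerFlux γ ρ v p) =
      p * (s + v) - (γ - 1) * p ^ 2 / (2 * ρ * (s + v)) := by
  have hγ' : γ - 1 ≠ 0 := sub_ne_zero.mpr hγ
  simp only [pressureOf, consU, eulerFlux, Prod.smul_mk, Prod.mk_add_mk, smul_eq_mul]
  field_simp
  ring

theorem mul_sub_div_pos_of_soundSpeed_le {γ ρ p a : ℝ} (hγ : 1 < γ) (hρ : 0 < ρ) (hp : 0 < p)
    (ha : soundSpeed γ ρ p ≤ a) :
    0 < p * a - (γ - 1) * p ^ 2 / (2 * ρ * a) := by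
  have hc := soundSpeed_pos (by linarith : (0:ℝ) < γ) hρ hp
  have hρa : γ * p ≤ ρ * a ^ 2 := by
    rw [← mul_soundSpeed_sq hρ (by positivity)]
    gcongr
  have hρa_pos : 0 < 2 * ρ * a := by nlinarith
  rw [sub_pos, div_lt_iff₀ hρa_pos]
  nlinarith

/-- Positivity of the left intermediate state `B = (λ − w)·U + F(U)` in the
Rusanov positivity proof: `ρ_B ≥ ρ c > 0` and `B` has positive pressure. -/
theorem left_intermediate_state_positivity
    (γ : ℝ) (hγ : 1 < γ) (ρ v p : ℝ) (hρ : 0 < ρ) (hp : 0 < p)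
    (lam w : ℝ) (hsig : (lam - w) + v ≥ soundSpeed γ ρ p)
    (B : ℝ × ℝ × ℝ) (hB : B = (lam - w) • consU γ ρ v p + eulerFlux γ ρ v p) :
    B.1 ≥ ρ * soundSpeed γ ρ p ∧ 0 < ρ * soundSpeed γ ρ p ∧ 0 < pressureOf γ B := by
  subst hB
  have hc := soundSpeed_pos (by linarith : (0:ℝ) < γ) hρ hp
  refine ⟨?_, by positivity, ?_⟩
  · rw [smul_consU_add_eulerFlux_fst]
    exact mul_le_mul_of_nonneg_left hsig hρ.le
  · rw [pressureOf_smul_consU_add_eulerFlux hγ.ne' hρ.ne' (by linarith)]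
    exact mul_sub_div_pos_of_soundSpeed_le hγ hρ hp hsig
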